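/- Let A be a real d × (N·N_G) matrix with columns indexed by pairs (i,g) ∈ {1,…,N}×{1,…,N_G}, and let P = { λ ∈ ℝ^d : ‖reshape(Aᵀλ)‖_{∞,2} ≤ 1 }. Then the polar set of P with respect to the standard inner product, P° = { z ∈ ℝ^d : ⟨z, λ⟩ ≤ 1 for all λ ∈ P }, equals { A b : b ∈ ℝ^{N·N_G}, ‖reshape(b)‖_{1,2} ≤ 1 }, the image under A of the unit ball of the group-sparse (1,2)-norm. -/

import Mathlib

/-!
The image `S` of the group-sparse unit ball under `A` is compact and convex and contains `0`,
so by Hahn–Banach every point outside `S` is separated from it by some `⟪·, λ⟫ ≤ 1`; hence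
`S` is the polar of `{λ | ⟪A b, λ⟫ ≤ 1 for all b in the unit ball}`. That set is `P`, because
the support function of the `(1,2)`-unit ball is the `(∞,2)`-norm: Cauchy–Schwarz row by row
gives `⟪c, b⟫ ≤ ‖c‖_{∞,2} ‖b‖_{1,2}`, and each row norm of `c` is attained at that row, normalized.
-/

open Matrix

/-- The ℓ₂ norm of the `i`-th row of `reshape c`. -/
noncomputable def rowNorm2 {N NG : ℕ} (c : Fin N × Fin NG → ℝ) (i : Fin N) : ℝ :=
  Real.sqrt (∑ g, (c (i, g)) ^ 2)

/-- The group-sparse norm `‖reshape c‖_{1,2}`. -/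
noncomputable def norm12 {N NG : ℕ} (c : Fin N × Fin NG → ℝ) : ℝ :=
  ∑ i, rowNorm2 c i

open scoped RealInnerProductSpace

theorem mem_of_forall_dotProduct_le_one {ι : Type*} [Fintype ι] {S : Set (ι → ℝ)}
    (hconv : Convex ℝ S) (hclosed : IsClosed S) (h0 : 0 ∈ S) {z : ι → ℝ}
    (hz : ∀ lam : ι → ℝ, (∀ s ∈ S, s ⬝ᵥ lam ≤ 1) → z ⬝ᵥ lam ≤ 1) : z ∈ S := by
  classical
  by_contra hzS
  obtain ⟨f, u, hfS, hfz⟩ := geometric_hahn_banach_closed_point hconv hclosed hzS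
  have hu : 0 < u := by simpa using hfS 0 h0
  set lam : ι → ℝ := fun j => u⁻¹ * f fun k => if j = k then 1 else 0
  have hf : ∀ w, w ⬝ᵥ lam = u⁻¹ * f w := fun w => by
    rw [← ContinuousLinearMap.coe_coe, LinearMap.pi_apply_eq_sum_univ, Finset.mul_sum]
    exact Finset.sum_congr rfl fun j _ => by
      simp only [lam, smul_eq_mul, ContinuousLinearMap.coe_coe]; ring
  have hz_lam := hz lam fun s hs => by rw [hf, inv_mul_le_one₀ hu]; exact (hfS s hs).le
  rw [hf, inv_mul_le_one₀ hu] at hz_lam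
  exact hz_lam.not_gt hfz

section GroupSparse

variable {N NG : ℕ}

def reshapeRow (i : Fin N) : (Fin N × Fin NG → ℝ) →ₗ[ℝ] EuclideanSpace ℝ (Fin NG) where
  toFun c := WithLp.toLp 2 fun g => c (i, g)
  map_add' _ _ := rfl
  map_smul' _ _ := rfl

theorem reshapeRow_apply (c : Fin N × Fin NG → ℝ) (i : Fin N) (g : Fin NG) :
    reshapeRow i c g = c (i, g) := rfl

theorem rowNorm2_eq_norm_reshapeRow (c : Fin N × Fin NG → ℝ) (i : Fin N) :
    rowNorm2 c i = ‖reshapeRow i c‖ := by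
  simp [EuclideanSpace.norm_eq, rowNorm2, reshapeRow_apply]

theorem rowNorm2_nonneg (c : Fin N × Fin NG → ℝ) (i : Fin N) : 0 ≤ rowNorm2 c i :=
  Real.sqrt_nonneg _

theorem dotProduct_eq_sum_inner_reshapeRow (c b : Fin N × Fin NG → ℝ) :
    c ⬝ᵥ b = ∑ i, ⟪reshapeRow i c, reshapeRow i b⟫ := by
  simp [dotProduct, Fintype.sum_prod_type, PiLp.inner_apply, reshapeRow_apply, mul_comm]

theorem dotProduct_le_mul_norm12 {c : Fin N × Fin NG → ℝ} {M : ℝ} (hc : ∀ i, rowNorm2 c i ≤ M)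
    (b : Fin N × Fin NG → ℝ) : c ⬝ᵥ b ≤ M * norm12 b := by
  rw [dotProduct_eq_sum_inner_reshapeRow, norm12, Finset.mul_sum]
  refine Finset.sum_le_sum fun i _ => ?_
  calc ⟪reshapeRow i c, reshapeRow i b⟫ ≤ ‖reshapeRow i c‖ * ‖reshapeRow i b‖ :=
        real_inner_le_norm _ _
    _ ≤ M * rowNorm2 b i := by
      rw [← rowNorm2_eq_norm_reshapeRow, ← rowNorm2_eq_norm_reshapeRow]
      exact mul_le_mul_of_nonneg_right (hc i) (rowNorm2_nonneg b i)

theorem norm12_add_le (b c : Fin N × Fin NG → ℝ) : norm12 (b + c) ≤ norm12 b + norm12 c := by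
  simp only [norm12, rowNorm2_eq_norm_reshapeRow, map_add, ← Finset.sum_add_distrib]
  exact Finset.sum_le_sum fun i _ => norm_add_le _ _

theorem norm12_smul (t : ℝ) (b : Fin N × Fin NG → ℝ) : norm12 (t • b) = ‖t‖ * norm12 b := by
  simp only [norm12, rowNorm2_eq_norm_reshapeRow, map_smul, norm_smul, Finset.mul_sum]

noncomputable def norm12Seminorm : Seminorm ℝ (Fin N × Fin NG → ℝ) :=
  Seminorm.of norm12 norm12_add_le norm12_smul

theorem convex_norm12_le_one : Convex ℝ {b : Fin N × Fin NG → ℝ | norm12 b ≤ 1} := by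
  have := (norm12Seminorm (N := N) (NG := NG)).convex_closedBall 0 1
  rwa [Seminorm.closedBall_zero_eq] at this

theorem continuous_norm12 : Continuous (norm12 : (Fin N × Fin NG → ℝ) → ℝ) := by
  unfold norm12 rowNorm2
  fun_prop

theorem abs_le_norm12 (b : Fin N × Fin NG → ℝ) (p : Fin N × Fin NG) : |b p| ≤ norm12 b :=
  calc |b p| = |reshapeRow p.1 b p.2| := rfl
    _ ≤ ‖reshapeRow p.1 b‖ := by simpa using PiLp.norm_apply_le (reshapeRow p.1 b) p.2
    _ ≤ norm12 b := by
      rw [← rowNorm2_eq_norm_reshapeRow]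
      exact Finset.single_le_sum (f := rowNorm2 b) (fun i _ => rowNorm2_nonneg b i)
        (Finset.mem_univ p.1)

theorem isCompact_norm12_le_one : IsCompact {b : Fin N × Fin NG → ℝ | norm12 b ≤ 1} := by
  refine Metric.isCompact_of_isClosed_isBounded (isClosed_le continuous_norm12 continuous_const)
    ((Metric.isBounded_closedBall (x := 0) (r := 1)).subset fun b hb => ?_)
  rw [mem_closedBall_zero_iff, pi_norm_le_iff_of_nonneg zero_le_one]
  exact fun p => (Real.norm_eq_abs _).trans_le ((abs_le_norm12 b p).trans hb)

def restrictRow (c : Fin N × Fin NG → ℝ) (i : Fin N) : Fin N × Fin NG → ℝ :=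
  fun p => if p.1 = i then c p else 0

theorem norm12_restrictRow (c : Fin N × Fin NG → ℝ) (i : Fin N) :
    norm12 (restrictRow c i) = rowNorm2 c i := by
  rw [norm12, Finset.sum_eq_single i]
  · simp [rowNorm2, restrictRow]
  · intro j _ hj; simp [rowNorm2, restrictRow, hj]
  · simp

theorem dotProduct_restrictRow (c : Fin N × Fin NG → ℝ) (i : Fin N) :
    c ⬝ᵥ restrictRow c i = rowNorm2 c i ^ 2 := by
  rw [rowNorm2, Real.sq_sqrt (Finset.sum_nonneg fun _ _ => sq_nonneg _), dotProduct,
    Fintype.sum_prod_type, Finset.sum_eq_single i]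
  · simp [restrictRow, sq]
  · intro j _ hj; simp [restrictRow, hj]
  · simp

-- When the row vanishes, `0⁻¹ = 0` makes the witness `0`, which still works.
theorem exists_norm12_le_one_dotProduct_eq_rowNorm2 (c : Fin N × Fin NG → ℝ) (i : Fin N) :
    ∃ b, norm12 b ≤ 1 ∧ c ⬝ᵥ b = rowNorm2 c i := by
  refine ⟨(rowNorm2 c i)⁻¹ • restrictRow c i, ?_, ?_⟩
  · rw [norm12_smul, norm12_restrictRow, Real.norm_eq_abs, abs_inv,
      abs_of_nonneg (rowNorm2_nonneg c i)]
    exact inv_mul_le_one_of_le₀ le_rfl (rowNorm2_nonneg c i)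
  · rw [dotProduct_smul, dotProduct_restrictRow, smul_eq_mul, sq, ← mul_assoc, inv_mul_mul_self]

end GroupSparse

/-- The polar of `P = {λ | ‖reshape (Aᵀ λ)‖_{∞,2} ≤ 1}` is the image under `A` of the unit
ball of the group-sparse `(1,2)`-norm. Here `‖reshape (Aᵀ λ)‖_{∞,2} ≤ 1` is expressed as:
every row of `reshape (Aᵀ λ)` has ℓ₂ norm at most `1`. -/
theorem stmt6 {d N NG : ℕ}
    (A : Matrix (Fin d) (Fin N × Fin NG) ℝ) :
    {z : Fin d → ℝ | ∀ lam : Fin d → ℝ,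
        (∀ i, rowNorm2 (Aᵀ *ᵥ lam) i ≤ 1) → z ⬝ᵥ lam ≤ 1} =
      {z : Fin d → ℝ | ∃ b : Fin N × Fin NG → ℝ, norm12 b ≤ 1 ∧ A *ᵥ b = z} := by
  have mulVec_dotProduct : ∀ lam b, (A *ᵥ b) ⬝ᵥ lam = (Aᵀ *ᵥ lam) ⬝ᵥ b := fun lam b => by
    rw [dotProduct_comm, dotProduct_mulVec, mulVec_transpose]
  ext z
  constructor
  · intro hz
    refine mem_of_forall_dotProduct_le_one (convex_norm12_le_one.linear_image A.mulVecLin)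
      (isCompact_norm12_le_one.image A.mulVecLin.continuous_of_finiteDimensional).isClosed
      ⟨0, by simp [norm12, rowNorm2], mulVec_zero A⟩ fun lam hlam => hz lam fun i => ?_
    obtain ⟨b, hb, hb_eq⟩ := exists_norm12_le_one_dotProduct_eq_rowNorm2 (Aᵀ *ᵥ lam) i
    rw [← hb_eq, ← mulVec_dotProduct]
    exact hlam _ ⟨b, hb, rfl⟩
  · rintro ⟨b, hb, rfl⟩ lam hlam
    rw [mulVec_dotProduct]
    exact (dotProduct_le_mul_norm12 hlam b).trans (by linarith)
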